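/- In the recursion tree of Quicksort on L' = a :: L (L a list of distinct keys, a fresh), every node whose corresponding recursive call is not determined by the previous computation on L lies on one of two root-to-leaf paths: the rightmost spine of the left subtree of the root or the leftmost spine of the right subtree of the root; hence the number of such 'new' calls is at most 2·depth(Q(L')) + O(1). -/

import Mathlib

/-- The list of inputs to all recursive calls (nodes of the recursion tree)
of head-pivot Quicksort on `L`. -/
def calls : List ℤ → List (List ℤ)
  | [] => []
  | h :: t =>
      (h :: t) :: (calls (t.filter (· < h)) ++ calls (t.filter (h < ·)))
termination_by L => L.length
decreasing_by
  all_goals simp [Nat.lt_succ_iff, List.length_filter_le]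
  all_goals exact le_trans (List.length_filter_le ..) (by simp)

/-- The inputs of the 'new' recursive calls of Quicksort on `L`, given the
set `old` of memoized call inputs: a call whose input is in `old` is skipped
(its result is found in the memo), otherwise it is new and we recurse. -/
def newCalls (old : List (List ℤ)) : List ℤ → List (List ℤ)
  | [] => []
  | h :: t =>
      if (h :: t) ∈ old then []
      else (h :: t) :: (newCalls old (t.filter (· < h)) ++
                        newCalls old (t.filter (h < ·)))
termination_by L => L.length
decreasing_by
  all_goals simp [Nat.lt_succ_iff, List.length_filter_le]
  all_goals exact le_trans (List.length_filter_le ..) (by simp)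

/-- The recursion tree of head-pivot Quicksort. -/
inductive QT : Type
  | leaf : QT
  | node : ℤ → QT → QT → QT

/-- Build the recursion tree of Quicksort on `L`. -/
def qt : List ℤ → QT
  | [] => .leaf
  | h :: t => .node h (qt (t.filter (· < h))) (qt (t.filter (h < ·)))
termination_by L => L.length
decreasing_by
  all_goals simp [Nat.lt_succ_iff, List.length_filter_le]
  all_goals exact le_trans (List.length_filter_le ..) (by simp)

/-- Depth of a recursion tree. -/
def depth : QT → ℕ
  | .leaf => 0
  | .node _ l r => 1 + max (depth l) (depth r)

/-- Pivots along the rightmost spine of a recursion tree. -/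
def rspine : QT → List ℤ
  | .leaf => []
  | .node p _ r => p :: rspine r

/-- Pivots along the leftmost spine of a recursion tree. -/
def lspine : QT → List ℤ
  | .leaf => []
  | .node p l _ => p :: lspine l

/-!
The root `a :: L` of `Q(a :: L)` is new because `a ∉ L`; its children are `L.filter (· < a)` and
`L.filter (a < ·)`. Let `C` be a call of `Q(L)`, so that all calls of `Q(C)` are memoized, and
`K = C.filter (· < a)`. If the pivot `c` of `C` is `≥ a`, then `K` is also the corresponding
filter of the left child of `C`. Otherwise `c` is the pivot of `K`, the left child of `K` equals
the left child of `C` and is memoized, and the right child of `K` is the filter of the right child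
of `C`. By induction on `C`, the new calls below `K` have their pivots on the rightmost spine of
`Q(K)`, one per node; symmetrically on the right.
-/

@[elab_as_elim]
theorem quicksort_induction {motive : List ℤ → Prop} (nil : motive [])
    (cons : ∀ h t, motive (t.filter (· < h)) → motive (t.filter (h < ·)) → motive (h :: t)) :
    ∀ L, motive L
  | [] => nil
  | h :: t =>
    cons h t (quicksort_induction nil cons (t.filter (· < h)))
      (quicksort_induction nil cons (t.filter (h < ·)))
termination_by L => L.length
decreasing_by
  all_goals simp only [List.length_cons]
  all_goals exact Nat.lt_succ_of_le (List.length_filter_le ..)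

theorem sublist_of_mem_calls {L M : List ℤ} (h : M ∈ calls L) : M.Sublist L := by
  induction L using quicksort_induction with
  | nil => simp [calls] at h
  | cons c u ihl ihr =>
    rw [calls, List.mem_cons, List.mem_append] at h
    rcases h with rfl | h | h
    · exact List.Sublist.refl _
    · exact ((ihl h).trans (List.filter_sublist)).cons c
    · exact ((ihr h).trans (List.filter_sublist)).cons c

theorem calls_filter_lt_subset (c : ℤ) (u : List ℤ) :
    calls (u.filter (· < c)) ⊆ calls (c :: u) := by
  rw [calls]
  exact List.Subset.trans (List.subset_append_left _ _) (List.subset_cons_self _ _)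

theorem calls_filter_gt_subset (c : ℤ) (u : List ℤ) :
    calls (u.filter (c < ·)) ⊆ calls (c :: u) := by
  rw [calls]
  exact List.Subset.trans (List.subset_append_right _ _) (List.subset_cons_self _ _)

theorem newCalls_eq_nil_of_calls_subset {old : List (List ℤ)} {M : List ℤ}
    (h : calls M ⊆ old) : newCalls old M = [] := by
  cases M with
  | nil => rw [newCalls]
  | cons c u =>
    rw [newCalls, if_pos (h (by rw [calls]; exact List.mem_cons_self))]

theorem newCalls_cons_of_not_mem {old : List (List ℤ)} {c : ℤ} {u : List ℤ}
    (h : c :: u ∉ old) :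
    newCalls old (c :: u) =
      (c :: u) :: (newCalls old (u.filter (· < c)) ++ newCalls old (u.filter (c < ·))) := by
  rw [newCalls, if_neg h]

theorem rspine_length_le_depth (T : QT) : (rspine T).length ≤ depth T := by
  induction T with
  | leaf => simp [rspine, depth]
  | node p l r _ ihr => simp only [rspine, depth, List.length_cons]; omega

theorem lspine_length_le_depth (T : QT) : (lspine T).length ≤ depth T := by
  induction T with
  | leaf => simp [lspine, depth]
  | node p l r ihl _ => simp only [lspine, depth, List.length_cons]; omega

theorem newCalls_filter_lt_sublist_rspine {old : List (List ℤ)} (a : ℤ)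
    (C : List ℤ) (hC : calls C ⊆ old) :
    List.Sublist ((newCalls old (C.filter (· < a))).map List.head?)
      ((rspine (qt (C.filter (· < a)))).map some) := by
  induction C using quicksort_induction with
  | nil => simp [newCalls]
  | cons c u ihl ihr =>
    by_cases hca : c < a
    · rw [List.filter_cons_of_pos (by simpa using hca)]
      by_cases hold : c :: u.filter (· < a) ∈ old
      · rw [newCalls, if_pos hold]
        exact List.nil_sublist _
      have hleft : (u.filter (· < a)).filter (· < c) = u.filter (· < c) := by
        rw [List.filter_filter]
        exact List.filter_congr fun x _ => by by_cases x < c <;> simp_all; omega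
      have hright : (u.filter (· < a)).filter (c < ·) = (u.filter (c < ·)).filter (· < a) :=
        List.filter_comm _ _ _
      rw [newCalls_cons_of_not_mem hold, hleft, hright,
        newCalls_eq_nil_of_calls_subset (List.Subset.trans (calls_filter_lt_subset c u) hC), qt,
        rspine, hright]
      exact (ihr (List.Subset.trans (calls_filter_gt_subset c u) hC)).cons_cons _
    · have hK : (c :: u).filter (· < a) = (u.filter (· < c)).filter (· < a) := by
        rw [List.filter_cons_of_neg (by simpa using hca), List.filter_filter]
        exact List.filter_congr fun x _ => by by_cases x < a <;> simp_all; omega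
      rw [hK]
      exact ihl (List.Subset.trans (calls_filter_lt_subset c u) hC)

theorem newCalls_filter_gt_sublist_lspine {old : List (List ℤ)} (a : ℤ)
    (C : List ℤ) (hC : calls C ⊆ old) :
    List.Sublist ((newCalls old (C.filter (a < ·))).map List.head?)
      ((lspine (qt (C.filter (a < ·)))).map some) := by
  induction C using quicksort_induction with
  | nil => simp [newCalls]
  | cons c u ihl ihr =>
    by_cases hac : a < c
    · rw [List.filter_cons_of_pos (by simpa using hac)]
      by_cases hold : c :: u.filter (a < ·) ∈ old
      · rw [newCalls, if_pos hold]
        exact List.nil_sublist _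
      have hright : (u.filter (a < ·)).filter (c < ·) = u.filter (c < ·) := by
        rw [List.filter_filter]
        exact List.filter_congr fun x _ => by by_cases c < x <;> simp_all; omega
      have hleft : (u.filter (a < ·)).filter (· < c) = (u.filter (· < c)).filter (a < ·) :=
        List.filter_comm _ _ _
      rw [newCalls_cons_of_not_mem hold, hright,
        newCalls_eq_nil_of_calls_subset (List.Subset.trans (calls_filter_gt_subset c u) hC),
        hleft, qt, lspine, hleft, List.append_nil]
      exact (ihl (List.Subset.trans (calls_filter_lt_subset c u) hC)).cons_cons _
    · have hK : (c :: u).filter (a < ·) = (u.filter (c < ·)).filter (a < ·) := by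
        rw [List.filter_cons_of_neg (by simpa using hac), List.filter_filter]
        exact List.filter_congr fun x _ => by by_cases a < x <;> simp_all; omega
      rw [hK]
      exact ihr (List.Subset.trans (calls_filter_gt_subset c u) hC)

theorem stmt19_general (L : List ℤ) (a : ℤ) (ha : a ∉ L) :
    (∀ M ∈ newCalls (calls L) (a :: L), ∀ p : ℤ, M.head? = some p →
      p = a ∨ p ∈ rspine (qt (L.filter (· < a))) ∨
        p ∈ lspine (qt (L.filter (a < ·)))) ∧
    (newCalls (calls L) (a :: L)).length ≤ 2 * depth (qt (a :: L)) + 1 := by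
  have hroot : a :: L ∉ calls L := fun h => ha ((sublist_of_mem_calls h).subset List.mem_cons_self)
  have hleft := newCalls_filter_lt_sublist_rspine a L (List.Subset.refl _)
  have hright := newCalls_filter_gt_sublist_lspine a L (List.Subset.refl _)
  rw [newCalls_cons_of_not_mem hroot]
  constructor
  · intro M hM p hp
    rcases List.mem_cons.mp hM with rfl | hM
    · exact Or.inl (by simpa using hp.symm)
    rcases List.mem_append.mp hM with hM | hM
    · exact Or.inr (Or.inl (by simpa [hp] using hleft.subset (List.mem_map_of_mem hM)))
    · exact Or.inr (Or.inr (by simpa [hp] using hright.subset (List.mem_map_of_mem hM)))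
  · have hl := hleft.length_le
    have hr := hright.length_le
    simp only [List.length_map] at hl hr
    have := rspine_length_le_depth (qt (L.filter (· < a)))
    have := lspine_length_le_depth (qt (L.filter (a < ·)))
    rw [qt, depth, List.length_cons, List.length_append]
    omega

/-- For `L' = a :: L` (`L` distinct, `a` fresh), every call of Quicksort on
`L'` not determined by the previous computation on `L` has its pivot at the
root (pivot `a`), on the rightmost spine of the left subtree of the root, or
on the leftmost spine of the right subtree of the root; hence the number of
new calls is at most `2 · depth (Q(L')) + 1`. -/
theorem stmt19 (L : List ℤ) (hnd : L.Nodup) (a : ℤ) (ha : a ∉ L) :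
    (∀ M ∈ newCalls (calls L) (a :: L), ∀ p : ℤ, M.head? = some p →
      p = a ∨ p ∈ rspine (qt (L.filter (· < a))) ∨
        p ∈ lspine (qt (L.filter (a < ·)))) ∧
    (newCalls (calls L) (a :: L)).length ≤ 2 * depth (qt (a :: L)) + 1 :=
  stmt19_general L a ha
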